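/- Let Q, P, H ∈ ℝ^{d×d} be symmetric matrices with r > 0, such that H is not a scalar multiple of P, ⟨P, Q − r·H/‖H‖_F⟩ < 0, and ⟨P, Q⟩² < r²‖P‖_F². Define α := √((‖P‖_F²‖H‖_F² − ⟨P,H⟩²)/(r²‖P‖_F² − ⟨P,Q⟩²)) and β := (⟨P,H⟩ − α⟨P,Q⟩)/‖P‖_F². Then the minimum of ⟨X, H⟩ over the set {X symmetric : ‖X − Q‖_F ≤ r and ⟨P, X⟩ ≥ 0} is attained at X* = (βP − H)/α + Q and equals ⟨H, (βP − H)/α + Q⟩. (This is the third case of the analytical solution of the linearly-constrained sphere rule problem (P4).) -/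

import Mathlib

/-!
Writing `D := X* - Q`, the choice of `α` and `β` makes `H = β • P - α • D` with `α, β > 0`,
`‖D‖_F = r` and `⟨P, X*⟩ = 0`: these are the KKT conditions of (P4) with both constraints active.
For feasible `X` this gives `⟨X - X*, H⟩ = β ⟨P, X⟩ + α (r² - ⟨X - Q, D⟩) ≥ 0` by Cauchy–Schwarz.
Nothing is specific to matrices: the Frobenius inner product is the Euclidean one on `ℝ^(d × d)`.
-/

open scoped BigOperators
open scoped Matrix

noncomputable def frob {d : ℕ} (A B : Matrix (Fin d) (Fin d) ℝ) : ℝ :=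
  Matrix.trace (Aᵀ * B)

noncomputable def frobNorm {d : ℕ} (A : Matrix (Fin d) (Fin d) ℝ) : ℝ :=
  Real.sqrt (frob A A)

open RealInnerProductSpace

lemma sub_mul_pos_of_sq_sub_sq_mul_eq {c q α r s P D : ℝ} (hα : 0 < α) (hr : 0 < r) (hs : 0 < s)
    (hP : 0 < P) (hD : 0 < D) (hqs : q * s < r * c)
    (hkey : (c ^ 2 - α ^ 2 * q ^ 2) * D = P * (r ^ 2 * c ^ 2 - s ^ 2 * q ^ 2)) :
    0 < c - α * q := by
  have hfactor : (c - α * q) * (c + α * q) * D = P * (r * c - q * s) * (r * c + q * s) := by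
    linear_combination hkey
  by_contra! hu
  have hw : 0 < P * (r * c - q * s) := mul_pos hP (by linarith)
  rcases le_or_gt q 0 with hq | hq
  · have hz : r * c + q * s < 0 := by
      nlinarith [mul_nonpos_of_nonneg_of_nonpos hs.le hq, mul_nonpos_of_nonneg_of_nonpos hα.le hq]
    nlinarith [mul_nonneg (mul_nonneg_of_nonpos_of_nonpos hu (by nlinarith : c + α * q ≤ 0)) hD.le,
      mul_neg_of_pos_of_neg hw hz]
  · have hz : 0 < r * c + q * s := by nlinarith [mul_pos hq hs]
    nlinarith [mul_nonpos_of_nonpos_of_nonneg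
      (mul_nonpos_of_nonpos_of_nonneg hu (by nlinarith : 0 ≤ c + α * q)) hD.le, mul_pos hw hz]

section InnerProductSpace

variable {E : Type*} [NormedAddCommGroup E] [InnerProductSpace ℝ E]

lemma sq_inner_lt_of_not_exists_eq_smul {p h : E} (hp : p ≠ 0) (hh : ¬ ∃ a : ℝ, h = a • p) :
    ⟪p, h⟫ ^ 2 < ‖p‖ ^ 2 * ‖h‖ ^ 2 := by
  have h0 : h ≠ 0 := fun h0 => hh ⟨0, by simp [h0]⟩
  have hne : |⟪p, h⟫| ≠ ‖p‖ * ‖h‖ := fun heq => by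
    obtain ⟨a, -, ha⟩ := (norm_inner_eq_norm_iff (𝕜 := ℝ) hp h0).1 (by rwa [Real.norm_eq_abs])
    exact hh ⟨a, ha⟩
  rw [← mul_pow, ← sq_abs]
  exact pow_lt_pow_left₀ ((abs_real_inner_le_norm p h).lt_of_ne hne) (abs_nonneg _) two_ne_zero

lemma inner_le_inner_of_eq_smul_sub_smul {p q h x₀ x : E} {r α β : ℝ} (hα : 0 ≤ α) (hβ : 0 ≤ β)
    (hh : h = β • p - α • (x₀ - q)) (hx₀q : ‖x₀ - q‖ = r) (hpx₀ : ⟪p, x₀⟫ = 0)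
    (hxq : ‖x - q‖ ≤ r) (hpx : 0 ≤ ⟪p, x⟫) :
    ⟪x₀, h⟫ ≤ ⟪x, h⟫ := by
  have hcs : ⟪x - q, x₀ - q⟫ ≤ ⟪x₀ - q, x₀ - q⟫ :=
    calc ⟪x - q, x₀ - q⟫ ≤ ‖x - q‖ * ‖x₀ - q‖ := real_inner_le_norm _ _
      _ ≤ ‖x₀ - q‖ * ‖x₀ - q‖ := mul_le_mul_of_nonneg_right (hxq.trans hx₀q.ge) (norm_nonneg _)
      _ = ⟪x₀ - q, x₀ - q⟫ := (real_inner_self_eq_norm_mul_norm _).symm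
  have hdiff : ⟪x, h⟫ - ⟪x₀, h⟫ = β * ⟪p, x⟫ + α * (⟪x₀ - q, x₀ - q⟫ - ⟪x - q, x₀ - q⟫) := by
    subst hh
    simp only [inner_sub_left, inner_sub_right, inner_smul_right, real_inner_comm p, hpx₀]
    ring
  nlinarith [mul_nonneg hβ hpx, mul_nonneg hα (sub_nonneg.2 hcs)]

lemma norm_eq_and_inner_eq_zero_of_multipliers {p q h : E} {r α β : ℝ} (hp : p ≠ 0) (hr : 0 ≤ r)
    (hα : 0 < α) (hα2 : α ^ 2 * (r ^ 2 * ‖p‖ ^ 2 - ⟪p, q⟫ ^ 2) = ‖p‖ ^ 2 * ‖h‖ ^ 2 - ⟪p, h⟫ ^ 2)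
    (hβ : β * ‖p‖ ^ 2 = ⟪p, h⟫ - α * ⟪p, q⟫) :
    ‖(1 / α) • (β • p - h)‖ = r ∧ ⟪p, (1 / α) • (β • p - h) + q⟫ = 0 := by
  have hp2 : ‖p‖ ^ 2 ≠ 0 := by positivity
  have hsq : ‖β • p - h‖ ^ 2 = α ^ 2 * r ^ 2 := by
    rw [norm_sub_sq_real, norm_smul, inner_smul_left, mul_pow, Real.norm_eq_abs, sq_abs,
      conj_trivial]
    refine mul_left_cancel₀ hp2 ?_
    linear_combination (β * ‖p‖ ^ 2 - ⟪p, h⟫ - α * ⟪p, q⟫) * hβ - hα2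
  constructor
  · refine (sq_eq_sq₀ (norm_nonneg _) hr).1 ?_
    rw [norm_smul, mul_pow, Real.norm_eq_abs, sq_abs, hsq]
    field_simp
  · rw [inner_add_right, inner_smul_right, inner_sub_right, inner_smul_right,
      real_inner_self_eq_norm_sq]
    field_simp
    linear_combination hβ

theorem sphere_halfspace_minimizer {p q h x₀ : E} {r α β : ℝ} (hr : 0 < r)
    (hnotmul : ¬ ∃ a : ℝ, h = a • p) (hcase : ⟪p, q - (r / ‖h‖) • h⟫ < 0)
    (hden : ⟪p, q⟫ ^ 2 < r ^ 2 * ‖p‖ ^ 2)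
    (hα : α = √((‖p‖ ^ 2 * ‖h‖ ^ 2 - ⟪p, h⟫ ^ 2) / (r ^ 2 * ‖p‖ ^ 2 - ⟪p, q⟫ ^ 2)))
    (hβ : β = (⟪p, h⟫ - α * ⟪p, q⟫) / ‖p‖ ^ 2) (hx₀ : x₀ = (1 / α) • (β • p - h) + q) :
    ‖x₀ - q‖ = r ∧ ⟪p, x₀⟫ = 0 ∧
      ∀ x, ‖x - q‖ ≤ r → 0 ≤ ⟪p, x⟫ → ⟪x₀, h⟫ ≤ ⟪x, h⟫ := by
  have hp : p ≠ 0 := by rintro rfl; simp at hden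
  have hhn : 0 < ‖h‖ := norm_pos_iff.2 fun h0 => hnotmul ⟨0, by simp [h0]⟩
  have hp2 : 0 < ‖p‖ ^ 2 := by positivity
  have hD : 0 < r ^ 2 * ‖p‖ ^ 2 - ⟪p, q⟫ ^ 2 := sub_pos.2 hden
  have hN : 0 < ‖p‖ ^ 2 * ‖h‖ ^ 2 - ⟪p, h⟫ ^ 2 :=
    sub_pos.2 (sq_inner_lt_of_not_exists_eq_smul hp hnotmul)
  have hαpos : 0 < α := hα ▸ Real.sqrt_pos.2 (div_pos hN hD)
  have hα2 : α ^ 2 * (r ^ 2 * ‖p‖ ^ 2 - ⟪p, q⟫ ^ 2) = ‖p‖ ^ 2 * ‖h‖ ^ 2 - ⟪p, h⟫ ^ 2 := by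
    rw [hα, Real.sq_sqrt (div_pos hN hD).le, div_mul_cancel₀ _ hD.ne']
  have hβp : β * ‖p‖ ^ 2 = ⟪p, h⟫ - α * ⟪p, q⟫ := by rw [hβ, div_mul_cancel₀ _ hp2.ne']
  -- `hcase` says that the unconstrained minimizer `q - (r / ‖h‖) • h` violates `0 ≤ ⟪p, x⟫`;
  -- this is what makes the multiplier `β` of that constraint positive.
  have hqs : ⟪p, q⟫ * ‖h‖ < r * ⟪p, h⟫ := by
    rwa [inner_sub_right, inner_smul_right, sub_neg, div_mul_eq_mul_div, lt_div_iff₀ hhn] at hcase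
  have hβpos : 0 < β := by
    refine hβ ▸ div_pos (sub_mul_pos_of_sq_sub_sq_mul_eq hαpos hr hhn hp2 hD hqs ?_) hp2
    linear_combination (-⟪p, q⟫ ^ 2) * hα2
  have hdir : x₀ - q = (1 / α) • (β • p - h) := by rw [hx₀, add_sub_cancel_right]
  obtain ⟨hnorm, hpx₀⟩ := norm_eq_and_inner_eq_zero_of_multipliers hp hr.le hαpos hα2 hβp
  rw [← hdir] at hnorm
  rw [← hx₀] at hpx₀
  refine ⟨hnorm, hpx₀, fun x hxq hpx => ?_⟩
  refine inner_le_inner_of_eq_smul_sub_smul hαpos.le hβpos.le ?_ hnorm hpx₀ hxq hpx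
  rw [hdir, smul_smul, mul_one_div_cancel hαpos.ne', one_smul, sub_sub_cancel]

end InnerProductSpace

noncomputable def flattenEuclidean (d : ℕ) :
    Matrix (Fin d) (Fin d) ℝ ≃ₗ[ℝ] EuclideanSpace ℝ (Fin d × Fin d) where
  toFun A := WithLp.toLp 2 fun ij => A ij.1 ij.2
  invFun v := Matrix.of fun i j => v (i, j)
  map_add' _ _ := rfl
  map_smul' _ _ := rfl
  left_inv _ := rfl
  right_inv _ := rfl

@[simp]
lemma flattenEuclidean_apply {d : ℕ} (A : Matrix (Fin d) (Fin d) ℝ) (ij : Fin d × Fin d) :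
    flattenEuclidean d A ij = A ij.1 ij.2 :=
  rfl

lemma frob_eq_inner {d : ℕ} (A B : Matrix (Fin d) (Fin d) ℝ) :
    frob A B = ⟪flattenEuclidean d A, flattenEuclidean d B⟫ := by
  simp only [frob, Matrix.trace, Matrix.diag, Matrix.mul_apply, Matrix.transpose_apply,
    PiLp.inner_apply, flattenEuclidean_apply, Fintype.sum_prod_type, RCLike.inner_apply,
    conj_trivial]
  rw [Finset.sum_comm]
  simp [mul_comm]

lemma frobNorm_eq_norm {d : ℕ} (A : Matrix (Fin d) (Fin d) ℝ) :
    frobNorm A = ‖flattenEuclidean d A‖ := by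
  rw [frobNorm, frob_eq_inner, real_inner_self_eq_norm_sq, Real.sqrt_sq (norm_nonneg _)]

lemma frob_comm {d : ℕ} (A B : Matrix (Fin d) (Fin d) ℝ) : frob A B = frob B A := by
  rw [frob_eq_inner, frob_eq_inner, real_inner_comm]

/-- Third case of the analytical solution of (P4): the linearly constrained sphere
minimizer when the linear constraint is active. -/
theorem sphere_linear_rule_case3 {d : ℕ} (Q P H : Matrix (Fin d) (Fin d) ℝ)
    (hQ : Q.IsSymm) (hP : P.IsSymm) (hH : H.IsSymm)
    (r : ℝ) (hr : 0 < r)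
    (hnotmul : ¬ ∃ a : ℝ, H = a • P)
    (hcase : frob P (Q - (r / frobNorm H) • H) < 0)
    (hden : frob P Q ^ 2 < r ^ 2 * frobNorm P ^ 2) :
    let α := Real.sqrt ((frobNorm P ^ 2 * frobNorm H ^ 2 - frob P H ^ 2) /
      (r ^ 2 * frobNorm P ^ 2 - frob P Q ^ 2))
    let β := (frob P H - α * frob P Q) / frobNorm P ^ 2
    let Xstar := (1 / α) • (β • P - H) + Q
    (Xstar.IsSymm ∧ frobNorm (Xstar - Q) ≤ r ∧ 0 ≤ frob P Xstar) ∧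
    (∀ X : Matrix (Fin d) (Fin d) ℝ, X.IsSymm → frobNorm (X - Q) ≤ r → 0 ≤ frob P X →
      frob Xstar H ≤ frob X H) ∧
    frob Xstar H = frob H ((1 / α) • (β • P - H) + Q) := by
  intro α β Xstar
  have hnotmul' : ¬ ∃ a : ℝ, flattenEuclidean d H = a • flattenEuclidean d P := fun ⟨a, ha⟩ =>
    hnotmul ⟨a, (flattenEuclidean d).injective (by rw [ha, map_smul])⟩
  simp only [frob_eq_inner, frobNorm_eq_norm, map_sub, map_smul] at hcase hden
  obtain ⟨hnorm, hpx₀, hmin⟩ := sphere_halfspace_minimizer (α := α) (β := β)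
    (x₀ := flattenEuclidean d Xstar) hr hnotmul' hcase hden
    (by simp only [α, frob_eq_inner, frobNorm_eq_norm])
    (by simp only [β, frob_eq_inner, frobNorm_eq_norm])
    (by simp only [Xstar, map_add, map_smul, map_sub])
  refine ⟨⟨(((hP.smul β).sub hH).smul (1 / α)).add hQ, ?_, ?_⟩, fun X _ hXq hPX => ?_,
    frob_comm _ _⟩
  · rw [frobNorm_eq_norm, map_sub, hnorm]
  · rw [frob_eq_inner, hpx₀]
  · rw [frobNorm_eq_norm, map_sub] at hXq
    rw [frob_eq_inner] at hPX
    simpa only [frob_eq_inner] using hmin (flattenEuclidean d X) hXq hPX
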